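/- Every guarded iterative monad (with f† the unique solution of each inr-guarded f) validates all iteration laws: naturality, dinaturality, codiagonal, and uniformity. -/

import Mathlib

open CategoryTheory CategoryTheory.Limits

universe v u

/-- `(σ, σ')` form a binary coproduct cospan, i.e. a summand together with its complement. -/
def IsCoprodCospan {C : Type u} [Category.{v} C] {Y' Y'' Y : C}
    (σ : Y' ⟶ Y) (σ' : Y'' ⟶ Y) : Prop :=
  Nonempty (IsColimit (BinaryCofan.mk σ σ'))

/-- A monad on `C`, presented as a Kleisli triple. -/
structure KMonad (C : Type u) [Category.{v} C] where
  obj : C → C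
  η : ∀ X : C, X ⟶ obj X
  bind : ∀ {X Y : C}, (X ⟶ obj Y) → (obj X ⟶ obj Y)
  η_bind : ∀ {X Y : C} (f : X ⟶ obj Y), η X ≫ bind f = f
  bind_η : ∀ X : C, bind (η X) = 𝟙 (obj X)
  bind_comp : ∀ {X Y Z : C} (f : X ⟶ obj Y) (g : Y ⟶ obj Z),
      bind (f ≫ bind g) = bind f ≫ bind g

/-- An abstractly guarded monad: its Kleisli category carries a notion of abstract
guardedness, i.e. a relation `guarded f σ σ'` between Kleisli morphisms
`f : X ⟶ obj Y` and summands `σ : Y' ⟶ Y` (with chosen complement `σ' : Y'' ⟶ Y`)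
closed under the rules (trv), (par) and (cmp), where the coproducts in the Kleisli
category are inherited from `C` (with injections `η ∘ inj`). -/
structure GMonad (C : Type u) [Category.{v} C] extends KMonad C where
  guarded : ∀ {X Y' Y'' Y : C}, (X ⟶ obj Y) → (Y' ⟶ Y) → (Y'' ⟶ Y) → Prop
  trv : ∀ {X Y Z P : C} (i₁ : Y ⟶ P) (i₂ : Z ⟶ P), IsCoprodCospan i₁ i₂ →
      ∀ f : X ⟶ obj Y, guarded (f ≫ bind (i₁ ≫ η P)) i₂ i₁
  par : ∀ {X Y P Z' Z'' Z : C} (j₁ : X ⟶ P) (j₂ : Y ⟶ P), IsCoprodCospan j₁ j₂ →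
      ∀ (σ : Z' ⟶ Z) (σ' : Z'' ⟶ Z) (u : P ⟶ obj Z),
      guarded (j₁ ≫ u) σ σ' → guarded (j₂ ≫ u) σ σ' → guarded u σ σ'
  cmp : ∀ {X Y Z P V' V'' V : C} (i₁ : Y ⟶ P) (i₂ : Z ⟶ P), IsCoprodCospan i₁ i₂ →
      ∀ (σ : V' ⟶ V) (σ' : V'' ⟶ V) (f : X ⟶ obj P) (u : P ⟶ obj V),
      guarded f i₂ i₁ → guarded (i₁ ≫ u) σ σ' → guarded (f ≫ bind u) σ σ'

/-- A guarded pre-iterative monad: every `inr`-guarded `f : X ⟶ T(Y+X)` has a chosen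
solution `iter f hf` satisfying the fixpoint identity `f† = [η, f†]* ∘ f`. -/
structure PIMonad (C : Type u) [Category.{v} C] [HasBinaryCoproducts C]
    extends GMonad C where
  iter : ∀ {X Y : C} (f : X ⟶ obj (Y ⨿ X)),
      guarded f (coprod.inr : X ⟶ Y ⨿ X) coprod.inl → (X ⟶ obj Y)
  iter_fixpoint : ∀ {X Y : C} (f : X ⟶ obj (Y ⨿ X))
      (hf : guarded f (coprod.inr : X ⟶ Y ⨿ X) coprod.inl),
      iter f hf = f ≫ bind (coprod.desc (η Y) (iter f hf))

/-- A guarded iterative monad: solutions of `inr`-guarded morphisms are unique. -/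
structure IMonad (C : Type u) [Category.{v} C] [HasBinaryCoproducts C]
    extends PIMonad C where
  iter_unique : ∀ {X Y : C} (f : X ⟶ obj (Y ⨿ X))
      (hf : guarded f (coprod.inr : X ⟶ Y ⨿ X) coprod.inl) (s : X ⟶ obj Y),
      s = f ≫ bind (coprod.desc (η Y) s) → s = iter f hf

/-- A monad morphism, in Kleisli-triple form. -/
structure KMonadHom {C : Type u} [Category.{v} C] (T S : KMonad C) where
  app : ∀ X : C, T.obj X ⟶ S.obj X
  app_η : ∀ X : C, T.η X ≫ app X = S.η X
  app_bind : ∀ (X Y : C) (f : X ⟶ T.obj Y),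
      T.bind f ≫ app Y = app X ≫ S.bind (f ≫ app Y)

/-- The naturality law of iteration:
`g* ∘ f† = ([T(inl) ∘ g, η ∘ inr]* ∘ f)†` for inr-guarded `f : X ⟶ T(Y+X)` and
`g : Y ⟶ T Z`. -/
def PIMonad.Naturality {C : Type u} [Category.{v} C] [HasBinaryCoproducts C]
    (T : PIMonad C) : Prop :=
  ∀ (X Y Z : C) (f : X ⟶ T.obj (Y ⨿ X))
    (hf : T.guarded f (coprod.inr : X ⟶ Y ⨿ X) coprod.inl)
    (g : Y ⟶ T.obj Z)
    (h' : T.guarded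
        (f ≫ T.bind (coprod.desc (g ≫ T.bind (coprod.inl ≫ T.η (Z ⨿ X)))
          (coprod.inr ≫ T.η (Z ⨿ X))))
        (coprod.inr : X ⟶ Z ⨿ X) coprod.inl),
    T.iter f hf ≫ T.bind g = T.iter _ h'

/-- The dinaturality law of iteration:
`([η ∘ inl, h]* ∘ g)† = [η, ([η ∘ inl, g]* ∘ h)†]* ∘ g`
for `g : X ⟶ T(Y+Z)`, `h : Z ⟶ T(Y+X)` with `g` inr-guarded or `h` inr-guarded. -/
def PIMonad.Dinaturality {C : Type u} [Category.{v} C] [HasBinaryCoproducts C]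
    (T : PIMonad C) : Prop :=
  ∀ (X Y Z : C) (g : X ⟶ T.obj (Y ⨿ Z)) (h : Z ⟶ T.obj (Y ⨿ X)),
    (T.guarded g (coprod.inr : Z ⟶ Y ⨿ Z) coprod.inl ∨
      T.guarded h (coprod.inr : X ⟶ Y ⨿ X) coprod.inl) →
    ∀ (hu : T.guarded (g ≫ T.bind (coprod.desc (coprod.inl ≫ T.η (Y ⨿ X)) h))
        (coprod.inr : X ⟶ Y ⨿ X) coprod.inl)
      (hv : T.guarded (h ≫ T.bind (coprod.desc (coprod.inl ≫ T.η (Y ⨿ Z)) g))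
        (coprod.inr : Z ⟶ Y ⨿ Z) coprod.inl),
    T.iter _ hu = g ≫ T.bind (coprod.desc (T.η Y) (T.iter _ hv))

/-- The codiagonal law of iteration: `(T[id, inr] ∘ f)† = f††` for
`f : X ⟶ T((Y+X)+X)` guarded in the summand `[inl ∘ inr, inr]`. -/
def PIMonad.Codiagonal {C : Type u} [Category.{v} C] [HasBinaryCoproducts C]
    (T : PIMonad C) : Prop :=
  ∀ (X Y : C) (f : X ⟶ T.obj ((Y ⨿ X) ⨿ X))
    (_h12 : T.guarded f
        (coprod.desc (coprod.inr ≫ coprod.inl) coprod.inr : X ⨿ X ⟶ (Y ⨿ X) ⨿ X)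
        (coprod.inl ≫ coprod.inl : Y ⟶ (Y ⨿ X) ⨿ X))
    (h1 : T.guarded f (coprod.inr : X ⟶ (Y ⨿ X) ⨿ X) coprod.inl)
    (h2 : T.guarded (T.iter f h1) (coprod.inr : X ⟶ Y ⨿ X) coprod.inl)
    (h3 : T.guarded (f ≫ T.bind (coprod.desc (𝟙 (Y ⨿ X)) coprod.inr ≫ T.η (Y ⨿ X)))
        (coprod.inr : X ⟶ Y ⨿ X) coprod.inl),
    T.iter _ h3 = T.iter (T.iter f h1) h2

/-- The uniformity law of iteration: `f ∘ h = T(id + h) ∘ g` implies `f† ∘ h = g†`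
for inr-guarded `f : X ⟶ T(Y+X)`, inr-guarded `g : Z ⟶ T(Y+Z)`, and `h : Z ⟶ X`. -/
def PIMonad.Uniformity {C : Type u} [Category.{v} C] [HasBinaryCoproducts C]
    (T : PIMonad C) : Prop :=
  ∀ (X Y Z : C) (f : X ⟶ T.obj (Y ⨿ X))
    (hf : T.guarded f (coprod.inr : X ⟶ Y ⨿ X) coprod.inl)
    (g : Z ⟶ T.obj (Y ⨿ Z))
    (hg : T.guarded g (coprod.inr : Z ⟶ Y ⨿ Z) coprod.inl)
    (h : Z ⟶ X),
    h ≫ f = g ≫ T.bind (coprod.map (𝟙 Y) h ≫ T.η (Y ⨿ X)) →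
    h ≫ T.iter f hf = T.iter g hg

/-!
Each law equates an iteration `f†` with an expression `s` built from other iterations. Since
`f†` is the unique solution of its fixpoint equation, it suffices to check
`s = [η, s]* ∘ f`, which follows by Kleisli calculus from the fixpoint equations of the
iterations occurring in `s`.
-/

namespace KMonad

variable {C : Type u} [Category.{v} C] (T : KMonad C)

theorem η_bind_assoc {W X Y : C} (k : W ⟶ X) (f : X ⟶ T.obj Y) :
    k ≫ T.η X ≫ T.bind f = k ≫ f := by
  rw [T.η_bind]

theorem bind_bind_assoc {W X Y Z : C} (k : W ⟶ T.obj X) (f : X ⟶ T.obj Y)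
    (g : Y ⟶ T.obj Z) : k ≫ T.bind f ≫ T.bind g = k ≫ T.bind (f ≫ T.bind g) := by
  rw [T.bind_comp]

end KMonad

namespace IMonad

variable {C : Type u} [Category.{v} C] [HasBinaryCoproducts C] (T : IMonad C)

theorem eq_iter_iff {X Y : C} (f : X ⟶ T.obj (Y ⨿ X))
    (hf : T.guarded f (coprod.inr : X ⟶ Y ⨿ X) coprod.inl) (s : X ⟶ T.obj Y) :
    s = T.iter f hf ↔ s = f ≫ T.bind (coprod.desc (T.η Y) s) :=
  ⟨fun hs => hs ▸ T.iter_fixpoint f hf, T.iter_unique f hf s⟩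

theorem naturality : T.toPIMonad.Naturality := by
  intro X Y Z f hf g h'
  rw [eq_iter_iff]
  calc T.iter f hf ≫ T.bind g
      = f ≫ T.bind (coprod.desc (T.η Y) (T.iter f hf)) ≫ T.bind g := by
        rw [← Category.assoc, ← T.iter_fixpoint]
    _ = f ≫ T.bind (coprod.desc g (T.iter f hf ≫ T.bind g)) := by
        rw [KMonad.bind_bind_assoc, coprod.desc_comp, T.η_bind]
    _ = _ := by
        simp only [Category.assoc, KMonad.bind_bind_assoc, coprod.desc_comp,
          coprod.inl_desc, coprod.inr_desc, T.η_bind, T.bind_η, Category.comp_id]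

theorem dinaturality : T.toPIMonad.Dinaturality := by
  intro X Y Z g h _ hu hv
  rw [eq_comm, eq_iter_iff]
  set s := g ≫ T.bind (coprod.desc (T.η Y) (T.iter _ hv))
  have hv_iter : T.iter _ hv = h ≫ T.bind (coprod.desc (T.η Y) s) := by
    conv_lhs => rw [T.iter_fixpoint _ hv]
    simp only [s, Category.assoc, KMonad.bind_bind_assoc, coprod.desc_comp,
      coprod.inl_desc, T.η_bind]
  calc s = g ≫ T.bind (coprod.desc (T.η Y) (h ≫ T.bind (coprod.desc (T.η Y) s))) := by
        rw [← hv_iter]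
    _ = _ := by
        simp only [Category.assoc, KMonad.bind_bind_assoc, coprod.desc_comp,
          coprod.inl_desc, T.η_bind]

theorem codiagonal : T.toPIMonad.Codiagonal := by
  intro X Y f _ h1 h2 h3
  rw [eq_comm, eq_iter_iff]
  set s := T.iter (T.iter f h1) h2
  calc s = T.iter f h1 ≫ T.bind (coprod.desc (T.η Y) s) := T.iter_fixpoint _ h2
    _ = f ≫ T.bind (coprod.desc (T.η (Y ⨿ X)) (T.iter f h1)) ≫
          T.bind (coprod.desc (T.η Y) s) := by
        rw [← Category.assoc, ← T.iter_fixpoint f h1]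
    _ = f ≫ T.bind (coprod.desc (coprod.desc (T.η Y) s) s) := by
        rw [KMonad.bind_bind_assoc, coprod.desc_comp, T.η_bind, ← T.iter_fixpoint _ h2]
    _ = _ := by
        simp only [Category.assoc, KMonad.bind_bind_assoc, coprod.desc_comp,
          T.η_bind, Category.id_comp, coprod.inr_desc]

theorem uniformity : T.toPIMonad.Uniformity := by
  intro X Y Z f hf g hg h hfh
  rw [eq_iter_iff]
  calc h ≫ T.iter f hf
      = (h ≫ f) ≫ T.bind (coprod.desc (T.η Y) (T.iter f hf)) := by
        rw [Category.assoc, ← T.iter_fixpoint]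
    _ = _ := by
        rw [hfh]
        simp only [Category.assoc, KMonad.bind_bind_assoc, coprod.map_desc,
          KMonad.η_bind_assoc, Category.id_comp]

end IMonad

theorem iterative_validates_iteration_laws {C : Type u} [Category.{v} C]
    [HasBinaryCoproducts C] (T : IMonad C) :
    T.toPIMonad.Naturality ∧ T.toPIMonad.Dinaturality ∧
      T.toPIMonad.Codiagonal ∧ T.toPIMonad.Uniformity :=
  ⟨T.naturality, T.dinaturality, T.codiagonal, T.uniformity⟩
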